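/- Let I = [0, 3π/4] and let ω = (ω₁, ω₂) be real-analytic on an open neighborhood of I with values in ℝ². Assume ω is weakly nondegenerate, i.e. for every (c₁, c₂) ∈ ℝ² \ {(0,0)}, the function φ ↦ c₁ω₁(φ) + c₂ω₂(φ) is not identically zero on I. Then there exist β > 0 and an integer μ₀ ≥ 1 such that for all φ ∈ I and all k ∈ ℤ² \ {0}: max_{0 ≤ μ ≤ μ₀} |(d/dφ)^μ (k·ω(φ))| ≥ β ‖k‖. -/

import Mathlib

open Real
open scoped RealInnerProductSpace

noncomputable section

abbrev E2 := EuclideanSpace ℝ (Fin 2)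

/-- The point of `ℝ²` (with the Euclidean norm) associated to an integer vector `k ∈ ℤ²`. -/
noncomputable def kv (k : Fin 2 → ℤ) : E2 :=
  EuclideanSpace.single 0 (k 0 : ℝ) + EuclideanSpace.single 1 (k 1 : ℝ)

/-! By the identity theorem, an analytic function that does not vanish identically on the interval
has, at every point of it, a nonvanishing derivative of some order; so for each unit vector `c` and
each `φ ∈ I` some derivative of `⟪c, ω⟫` is nonzero at `φ`. These derivatives are continuous in
`(c, φ)`, so compactness of `sphere × I` bounds the order needed by some `μ₀` and bounds the
largest of the first `μ₀` derivatives below by some `β > 0`. Homogeneity in `c` turns this into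
the bound `β ‖k‖`. -/

theorem ContinuousLinearMap.iteratedDeriv_comp_left {𝕜 F G : Type*} [NontriviallyNormedField 𝕜]
    [NormedAddCommGroup F] [NormedSpace 𝕜 F] [NormedAddCommGroup G] [NormedSpace 𝕜 G]
    {f : 𝕜 → F} {x : 𝕜} {n : WithTop ℕ∞} (g : F →L[𝕜] G) (hf : ContDiffAt 𝕜 n f x) {i : ℕ}
    (hi : i ≤ n) : iteratedDeriv i (g ∘ f) x = g (iteratedDeriv i f x) := by
  simp only [iteratedDeriv_eq_iteratedFDeriv, g.iteratedFDeriv_comp_left hf hi,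
    ContinuousLinearMap.compContinuousMultilinearMap_coe, Function.comp_apply]

theorem AnalyticAt.exists_iteratedDeriv_ne_zero {𝕜 E : Type*} [NontriviallyNormedField 𝕜]
    [CharZero 𝕜] [NormedAddCommGroup E] [NormedSpace 𝕜 E] [CompleteSpace E] {f : 𝕜 → E} {x : 𝕜}
    (hf : AnalyticAt 𝕜 f x) (hord : analyticOrderAt f x ≠ ⊤) : ∃ n, iteratedDeriv n f x ≠ 0 := by
  by_contra! h
  exact hord <| ENat.eq_top_iff_forall_ge.2 fun m =>
    (natCast_le_analyticOrderAt_iff_iteratedDeriv_eq_zero hf).2 fun i _ => h i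

theorem AnalyticOnNhd.exists_iteratedDeriv_ne_zero_of_isPreconnected {𝕜 E : Type*}
    [NontriviallyNormedField 𝕜] [CharZero 𝕜] [NormedAddCommGroup E] [NormedSpace 𝕜 E]
    [CompleteSpace E] {f : 𝕜 → E} {s : Set 𝕜} {x y : 𝕜} (hf : AnalyticOnNhd 𝕜 f s)
    (hs : IsPreconnected s) (hy : y ∈ s) (hfy : f y ≠ 0) (hx : x ∈ s) :
    ∃ n, iteratedDeriv n f x ≠ 0 :=
  (hf x hx).exists_iteratedDeriv_ne_zero <|
    hf.analyticOrderAt_ne_top_of_isPreconnected hs hy hx <| by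
      simp [analyticOrderAt_eq_zero.2 (Or.inr hfy)]

theorem IsCompact.exists_pos_forall_exists_le_norm {X E : Type*} [TopologicalSpace X]
    [NormedAddCommGroup E] {K : Set X} (hK : IsCompact K) {g : ℕ → X → E}
    (hg : ∀ n, ContinuousOn (g n) K) (h : ∀ x ∈ K, ∃ n, g n x ≠ 0) :
    ∃ β > 0, ∃ N, ∀ x ∈ K, ∃ n ≤ N, β ≤ ‖g n x‖ := by
  obtain ⟨N, hN⟩ : ∃ N, ∀ x ∈ K, ∃ n ≤ N, g n x ≠ 0 := by
    choose! m hm using h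
    obtain ⟨t, -, ht⟩ := hK.elim_nhdsWithin_subcover (fun x => {y | g (m x) y ≠ 0})
      fun x hx => (hg (m x) x hx).eventually_ne (hm x hx)
    refine ⟨t.sup m, fun y hy => ?_⟩
    obtain ⟨x, hxt, hxy⟩ := Set.mem_iUnion₂.1 (ht hy)
    exact ⟨m x, Finset.le_sup hxt, hxy⟩
  set G : X → ℝ := fun x => (Finset.range (N + 1)).sup' Finset.nonempty_range_add_one
    fun n => ‖g n x‖
  have hG : ContinuousOn G K :=
    ContinuousOn.finset_sup'_apply _ fun n _ => (hg n).norm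
  obtain ⟨β, hβ, hβG⟩ := hK.exists_forall_le' hG fun x hx => by
    obtain ⟨n, hnN, hn⟩ := hN x hx
    exact (norm_pos_iff.2 hn).trans_le <|
      Finset.le_sup' (fun n => ‖g n x‖) (Finset.mem_range_succ_iff.2 hnN)
  refine ⟨β, hβ, N, fun x hx => ?_⟩
  obtain ⟨n, hn, hGn⟩ := Finset.exists_mem_eq_sup' Finset.nonempty_range_add_one fun n => ‖g n x‖
  exact ⟨n, Finset.mem_range_succ_iff.1 hn, hGn ▸ hβG x hx⟩

section InnerProduct

variable {F : Type*} [NormedAddCommGroup F] [InnerProductSpace ℝ F]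

theorem AnalyticAt.iteratedDeriv_inner_left {ω : ℝ → F} {x : ℝ} [CompleteSpace F]
    (hω : AnalyticAt ℝ ω x) (c : F) (n : ℕ) : iteratedDeriv n (fun t => ⟪c, ω t⟫) x = ⟪c, iteratedDeriv n ω x⟫ :=
  (innerSL ℝ c).iteratedDeriv_comp_left hω.contDiffAt (n := ⊤) le_top

theorem exists_pos_forall_exists_mul_norm_le_iteratedDeriv_inner [FiniteDimensional ℝ F]
    {K : Set ℝ} (hK : IsCompact K) (hKc : IsPreconnected K) {ω : ℝ → F}
    (hω : AnalyticOnNhd ℝ ω K) (hnd : ∀ c : F, c ≠ 0 → ∃ φ ∈ K, ⟪c, ω φ⟫ ≠ 0) :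
    ∃ β > 0, ∃ N, ∀ φ ∈ K, ∀ c : F,
      ∃ μ ≤ N, β * ‖c‖ ≤ |iteratedDeriv μ (fun t => ⟪c, ω t⟫) φ| := by
  have hcont : ∀ n, ContinuousOn (fun p : F × ℝ => ⟪p.1, iteratedDeriv n ω p.2⟫)
      (Metric.sphere 0 1 ×ˢ K) := fun n =>
    continuousOn_fst.inner <| (iteratedDeriv_eq_iterate (f := ω) ▸
      (hω.iterated_deriv n).continuousOn).comp continuousOn_snd fun _ hp => hp.2
  have hne : ∀ p ∈ Metric.sphere (0 : F) 1 ×ˢ K, ∃ n, ⟪p.1, iteratedDeriv n ω p.2⟫ ≠ 0 := by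
    rintro ⟨c, φ⟩ ⟨hc, hφ⟩
    have hc : c ≠ 0 := ne_zero_of_mem_unit_sphere ⟨c, hc⟩
    obtain ⟨ψ, hψ, hcψ⟩ := hnd c hc
    obtain ⟨n, hn⟩ := AnalyticOnNhd.exists_iteratedDeriv_ne_zero_of_isPreconnected
      (fun t ht => (innerSL ℝ c).analyticAt _ |>.comp (hω t ht)) hKc hψ hcψ hφ
    exact ⟨n, (hω φ hφ).iteratedDeriv_inner_left c n ▸ hn⟩
  obtain ⟨β, hβ, N, hN⟩ :=
    ((isCompact_sphere 0 1).prod hK).exists_pos_forall_exists_le_norm hcont hne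
  refine ⟨β, hβ, N, fun φ hφ c => ?_⟩
  rcases eq_or_ne c 0 with rfl | hc
  · exact ⟨0, N.zero_le, by simp⟩
  have hc' : 0 < ‖c‖ := norm_pos_iff.2 hc
  obtain ⟨μ, hμN, hμ⟩ := hN (‖c‖⁻¹ • c, φ) ⟨by simp [norm_smul, hc'.ne'], hφ⟩
  refine ⟨μ, hμN, ?_⟩
  rw [(hω φ hφ).iteratedDeriv_inner_left]
  rw [real_inner_smul_left, norm_mul, Real.norm_eq_abs, Real.norm_eq_abs, abs_inv, abs_norm,
    le_inv_mul_iff₀ hc'] at hμ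
  linarith

end InnerProduct

theorem stmt12_general (U : Set ℝ)
    (hIU : Set.Icc (0 : ℝ) (3 * π / 4) ⊆ U)
    (ω : ℝ → E2) (hω : AnalyticOnNhd ℝ ω U)
    (hnd : ∀ c : E2, c ≠ 0 →
      ∃ φ ∈ Set.Icc (0 : ℝ) (3 * π / 4), ⟪c, ω φ⟫ ≠ 0) :
    ∃ β : ℝ, 0 < β ∧ ∃ μ₀ : ℕ, 1 ≤ μ₀ ∧
      ∀ φ ∈ Set.Icc (0 : ℝ) (3 * π / 4), ∀ k : Fin 2 → ℤ, k ≠ 0 →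
        ∃ μ : ℕ, μ ≤ μ₀ ∧
          β * ‖kv k‖ ≤ |iteratedDeriv μ (fun t => ⟪kv k, ω t⟫) φ| := by
  obtain ⟨β, hβ, N, hN⟩ := exists_pos_forall_exists_mul_norm_le_iteratedDeriv_inner
    isCompact_Icc isPreconnected_Icc (hω.mono hIU) hnd
  refine ⟨β, hβ, N + 1, N.succ_pos, fun φ hφ k _ => ?_⟩
  obtain ⟨μ, hμN, hμ⟩ := hN φ hφ (kv k)
  exact ⟨μ, hμN.trans N.le_succ, hμ⟩

/-- If `ω` is real-analytic on a neighborhood of `I = [0, 3π/4]` and weakly nondegenerate,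
then there are `β > 0` and an integer `μ₀ ≥ 1` such that for every `φ ∈ I` and every
`k ∈ ℤ² \ {0}`, some derivative `(d/dφ)^μ (k·ω(φ))` with `0 ≤ μ ≤ μ₀` has absolute value
at least `β‖k‖`. -/
theorem stmt12 (U : Set ℝ) (hU : IsOpen U)
    (hIU : Set.Icc (0 : ℝ) (3 * π / 4) ⊆ U)
    (ω : ℝ → E2) (hω : AnalyticOnNhd ℝ ω U)
    (hnd : ∀ c : E2, c ≠ 0 →
      ∃ φ ∈ Set.Icc (0 : ℝ) (3 * π / 4), ⟪c, ω φ⟫ ≠ 0) :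
    ∃ β : ℝ, 0 < β ∧ ∃ μ₀ : ℕ, 1 ≤ μ₀ ∧
      ∀ φ ∈ Set.Icc (0 : ℝ) (3 * π / 4), ∀ k : Fin 2 → ℤ, k ≠ 0 →
        ∃ μ : ℕ, μ ≤ μ₀ ∧
          β * ‖kv k‖ ≤ |iteratedDeriv μ (fun t => ⟪kv k, ω t⟫) φ| :=
  stmt12_general U hIU ω hω hnd
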